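/- Let n ≥ 1 be a natural number, t0 ∈ ℝ, Tc > 0, α > 0, 0 < η ≤ 1, let υ : ℝⁿ → ℝ be any function, and let π : [0, ∞) → ℝ. Define κ(s) = η/(α·(Tc - η·s)) for s ∈ [0, Tc/η), φ(t) = -α⁻¹·ln(1 - η·(t - t0)/Tc), and Ω(s) = diag(1, κ(s), …, κ(s)^{n-1}). Suppose y : [0, ∞) → ℝⁿ is such that for every τ ≥ 0, y_i has derivative y_{i+1}(τ) - α·(i-1)·y_i(τ) at τ for i = 1, …, n-1, and y_n has derivative υ(y(τ)) - α·(n-1)·y_n(τ) + π(τ) at τ. Define x : [t0, t0 + Tc/η) → ℝⁿ by x(t) = Ω(t - t0)·y(φ(t)), i.e., x_i(t) = κ(t - t0)^{i-1}·y_i(φ(t)). Then for every t ∈ [t0, t0 + Tc/η): x_i has derivative x_{i+1}(t) at t for i = 1, …, n-1, and x_n has derivative κ(t - t0)ⁿ·υ(Ω(t - t0)⁻¹·x(t)) + δ(t) at t, where δ(t) = κ(t - t0)ⁿ·π(φ(t)). -/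

import Mathlib

/-! The gain satisfies the Riccati equation `κ' = α κ²` and the time change satisfies
`φ'(t) = κ(t - t0)`. Scaling the `i`-th coordinate by `κⁱ` therefore contributes
`i α κⁱ⁺¹ yᵢ` to the derivative, which exactly cancels the damping term `-α i yᵢ` of the
auxiliary system after the chain rule multiplies it by `φ' = κ`. -/

lemma HasDerivAt.pow_mul_comp_cancel_damping {k φ z : ℝ → ℝ} {α w t : ℝ} (i : ℕ)
    (hk : HasDerivAt k (α * k t ^ 2) t) (hφ : HasDerivAt φ (k t) t)
    (hz : HasDerivAt z (w - α * i * z (φ t)) (φ t)) :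
    HasDerivAt (fun s => k s ^ i * z (φ s)) (k t ^ (i + 1) * w) t := by
  refine ((hk.pow i).mul (hz.comp t hφ)).congr_deriv ?_
  rcases i with _ | i
  · simp [mul_comm]
  · simp only [Function.comp_apply, Pi.pow_apply, Nat.add_sub_cancel]
    push_cast
    ring

lemma hasDerivAt_div_affine_sq {α η Tc s : ℝ} (hα : α ≠ 0) (hs : Tc - η * s ≠ 0) :
    HasDerivAt (fun s => η / (α * (Tc - η * s))) (α * (η / (α * (Tc - η * s))) ^ 2) s := by
  have hden : HasDerivAt (fun s => α * (Tc - η * s)) (α * -(η * 1)) s :=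
    (((hasDerivAt_id s).const_mul η).const_sub Tc).const_mul α
  refine ((hasDerivAt_const s η).div hden (mul_ne_zero hα hs)).congr_deriv ?_
  field_simp
  ring

lemma hasDerivAt_neg_inv_mul_log_one_sub {α η Tc t0 t : ℝ} (hTc : Tc ≠ 0)
    (ht : Tc - η * (t - t0) ≠ 0) :
    HasDerivAt (fun t => -α⁻¹ * Real.log (1 - η * (t - t0) / Tc))
      (η / (α * (Tc - η * (t - t0)))) t := by
  have hlin : HasDerivAt (fun t => 1 - η * (t - t0) / Tc) (-(η * 1 / Tc)) t :=
    ((((hasDerivAt_id t).sub_const t0).const_mul η).div_const Tc).const_sub 1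
  have hne : 1 - η * (t - t0) / Tc ≠ 0 := by
    rwa [one_sub_div hTc, div_ne_zero_iff, and_iff_left hTc]
  refine ((hlin.log hne).const_mul (-α⁻¹)).congr_deriv ?_
  rw [one_sub_div hTc]
  field_simp

lemma neg_inv_mul_log_one_sub_nonneg {α η Tc s : ℝ} (hα : 0 ≤ α) (hTc : 0 < Tc)
    (hs : 0 ≤ η * s) (hsT : η * s ≤ Tc) :
    0 ≤ -α⁻¹ * Real.log (1 - η * s / Tc) := by
  have hlog : Real.log (1 - η * s / Tc) ≤ 0 :=
    Real.log_nonpos (by rw [sub_nonneg, div_le_one hTc]; exact hsT)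
      (by linarith [div_nonneg hs hTc.le])
  nlinarith [inv_nonneg.mpr hα]

/-- Converse direction of the coordinate-and-time change of Theorem 1 of the paper:
if `y` solves the auxiliary system `dy_i/dτ = y_{i+1} - α (i-1) y_i`,
`dy_n/dτ = υ(y) - α (n-1) y_n + π(τ)`, then `x(t) = Ω(t - t0) y(φ(t))` (componentwise
`x_i(t) = κ(t - t0)^{i-1} y_i(φ(t))`, here with `0`-based indices) solves the perturbed
chain of integrators `ẋ_i = x_{i+1}`,
`ẋ_n = κ(t - t0)ⁿ υ(Ω(t - t0)⁻¹ x(t)) + δ(t)` with `δ(t) = κ(t - t0)ⁿ π(φ(t))`. -/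
theorem stmt_16 (n : ℕ) (hn : 1 ≤ n) (t0 Tc α η : ℝ) (hTc : 0 < Tc) (hα : 0 < α)
    (hη0 : 0 < η)
    (υ : (Fin n → ℝ) → ℝ) (π : ℝ → ℝ)
    (κ : ℝ → ℝ) (hκ : ∀ s, κ s = η / (α * (Tc - η * s)))
    (φ : ℝ → ℝ) (hφ : ∀ t, φ t = -α⁻¹ * Real.log (1 - η * (t - t0) / Tc))
    (y : ℝ → Fin n → ℝ)
    (hy : ∀ τ : ℝ, 0 ≤ τ → ∀ i : Fin n, ∀ h : (i : ℕ) + 1 < n,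
      HasDerivAt (fun σ => y σ i)
        (y τ ⟨(i : ℕ) + 1, h⟩ - α * (i : ℕ) * y τ i) τ)
    (hyn : ∀ τ : ℝ, 0 ≤ τ →
      HasDerivAt (fun σ => y σ ⟨n - 1, by omega⟩)
        (υ (y τ) - α * ((n : ℝ) - 1) * y τ ⟨n - 1, by omega⟩ + π τ) τ)
    (x : ℝ → Fin n → ℝ)
    (hx : ∀ t, ∀ i : Fin n, x t i = κ (t - t0) ^ (i : ℕ) * y (φ t) i)
    (δ : ℝ → ℝ) (hδ : ∀ t, δ t = κ (t - t0) ^ n * π (φ t)) :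
    ∀ t ∈ Set.Ico t0 (t0 + Tc / η),
      (∀ i : Fin n, ∀ h : (i : ℕ) + 1 < n,
        HasDerivAt (fun s => x s i) (x t ⟨(i : ℕ) + 1, h⟩) t) ∧
      HasDerivAt (fun s => x s ⟨n - 1, by omega⟩)
        (κ (t - t0) ^ n * υ (fun j => (κ (t - t0) ^ (j : ℕ))⁻¹ * x t j) + δ t) t := by
  rintro t ⟨ht0, ht1⟩
  have hgap : 0 < Tc - η * (t - t0) := by
    have := (lt_div_iff₀' hη0).mp (sub_lt_iff_lt_add'.mpr ht1)
    linarith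
  have hκd : HasDerivAt (fun s => κ (s - t0)) (α * κ (t - t0) ^ 2) t := by
    rw [funext hκ]
    exact (hasDerivAt_div_affine_sq hα.ne' hgap.ne').comp_sub_const t t0
  have hφd : HasDerivAt φ (κ (t - t0)) t := by
    rw [funext hφ, hκ]
    exact hasDerivAt_neg_inv_mul_log_one_sub hTc.ne' hgap.ne'
  have hφ0 : 0 ≤ φ t := by
    rw [hφ]
    exact neg_inv_mul_log_one_sub_nonneg hα.le hTc
      (mul_nonneg hη0.le (sub_nonneg.mpr ht0)) (sub_nonneg.mp hgap.le)
  have hxd : ∀ i : Fin n, (fun s => x s i) = fun s => κ (s - t0) ^ (i : ℕ) * y (φ s) i :=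
    fun i => funext fun s => hx s i
  refine ⟨fun i h => ?_, ?_⟩
  · rw [hxd, hx]
    exact hκd.pow_mul_comp_cancel_damping i hφd (hy (φ t) hφ0 i h)
  · have hyx : (fun j : Fin n => (κ (t - t0) ^ (j : ℕ))⁻¹ * x t j) = y (φ t) := by
      have hκ0 : κ (t - t0) ≠ 0 := by rw [hκ]; positivity
      funext j
      rw [hx, inv_mul_cancel_left₀ (pow_ne_zero _ hκ0)]
    have hyn' : HasDerivAt (fun σ => y σ ⟨n - 1, by omega⟩)
        (υ (y (φ t)) + π (φ t) - α * ((n - 1 : ℕ) : ℝ) * y (φ t) ⟨n - 1, by omega⟩) (φ t) :=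
      (hyn (φ t) hφ0).congr_deriv (by rw [Nat.cast_pred hn]; ring)
    rw [hxd, hyx, hδ]
    convert hκd.pow_mul_comp_cancel_damping (n - 1) hφd hyn' using 1
    rw [Nat.sub_add_cancel hn]
    ring
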